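/- Let β ∈ [0,1), λ = 1−β, and let n satisfy Assumption 1 with δ* > 2λ. Then the variance of the clone size converges: lim_{t→∞} Var(Y_t) = (δ*/λ)·(2/(δ*−2λ) − (2−λ)/(δ*−λ)) − (δ*/(δ*−λ))². -/

import Mathlib

open Filter Real intervalIntegral

/-- Assumption 1 on the wild-type growth function `n`. -/
def Assumption1 (n : ℝ → ℝ) : Prop :=
  (∀ τ : ℝ, τ < 0 → n τ = 0) ∧
  ContinuousOn n (Set.Ioi 0) ∧
  Filter.Tendsto n (nhdsWithin 0 (Set.Ioi 0)) (nhds (n 0)) ∧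
  (∀ τ : ℝ, 0 < τ → 0 < n τ) ∧
  MonotoneOn n (Set.Ioi 0) ∧
  (∀ x : ℝ, 0 ≤ x → ∃ L : ℝ, 0 < L ∧
    Filter.Tendsto (fun t : ℝ => n (t - x) / n t) Filter.atTop (nhds L))

/-!
After the substitution `τ = t - x`,
`e^{ct}/n_t · ∫_0^t n_τ e^{-cτ} dτ = ∫_0^t (n_{t-x}/n_t) e^{cx} dx`.
The ratio `n_{t-x}/n_t` has a positive limit `L_x` by Assumption 1, and a Cesàro argument
along `t = kx` shows `-log L_x = δ* x`. For `c < r < δ*` one has `n_{t-1} ≤ e^{-r} n_t`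
eventually; iterating this and using that `n_t e^{-rt} → ∞` gives the integrable bound
`n_{t-x} ≤ e^{r(1-x)} n_t` on `[0, t]`, so by dominated convergence the integral tends to
`∫_0^∞ e^{-(δ*-c)x} dx = 1/(δ*-c)`. Mean and second moment are rational functions of these
quantities for `c = 0, λ, 2λ`.
-/

open MeasureTheory Set Topology

theorem integral_mul_exp_neg_mul_mul_exp (f : ℝ → ℝ) (c t : ℝ) :
    (∫ τ in (0 : ℝ)..t, f τ * exp (-c * τ)) * exp (c * t) =
      ∫ x in (0 : ℝ)..t, f (t - x) * exp (c * x) := by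
  have hsub := intervalIntegral.integral_comp_sub_left (a := 0) (b := t)
    (fun τ => f τ * exp (c * (t - τ))) t
  simp only [sub_self, sub_zero, sub_sub_cancel] at hsub
  rw [hsub, ← intervalIntegral.integral_mul_const]
  refine intervalIntegral.integral_congr fun τ _ => ?_
  rw [mul_assoc, ← exp_add]
  ring_nf

theorem eq_mul_of_tendsto_div_of_tendsto_sub_shift {f : ℝ → ℝ} {δ ℓ x : ℝ} (hx : 0 < x)
    (hf : Tendsto (fun t => f t / t) atTop (𝓝 δ))
    (hd : Tendsto (fun t => f t - f (t - x)) atTop (𝓝 ℓ)) :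
    ℓ = δ * x := by
  set g : ℕ → ℝ := fun k => f (k * x)
  have hkx : Tendsto (fun k : ℕ => (k : ℝ) * x) atTop atTop :=
    tendsto_natCast_atTop_atTop.atTop_mul_const hx
  have hstep : Tendsto (fun k : ℕ => g (k + 1) - g k) atTop (𝓝 ℓ) := by
    refine (hd.comp (hkx.comp (tendsto_add_atTop_nat 1))).congr fun k => ?_
    simp [g, add_mul]
  have hces : Tendsto (fun k : ℕ => (k : ℝ)⁻¹ * (g k - g 0)) atTop (𝓝 ℓ) := by
    simpa only [Finset.sum_range_sub] using hstep.cesaro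
  have hgrowth : Tendsto (fun k : ℕ => (k : ℝ)⁻¹ * (g k - g 0)) atTop (𝓝 (δ * x)) := by
    have hmain : Tendsto (fun k : ℕ => g k / (k * x) * x) atTop (𝓝 (δ * x)) :=
      (hf.comp hkx).mul_const x
    have hzero : Tendsto (fun k : ℕ => (k : ℝ)⁻¹ * g 0) atTop (𝓝 0) := by
      simpa using (tendsto_inv_atTop_zero.comp tendsto_natCast_atTop_atTop).mul_const (g 0)
    refine (sub_zero (δ * x) ▸ hmain.sub hzero).congr' ?_
    filter_upwards [eventually_gt_atTop 0] with k hk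
    field_simp
  exact tendsto_nhds_unique hces hgrowth

theorem tendsto_mul_exp_neg_mul_atTop {f : ℝ → ℝ} {δ r : ℝ} (hpos : ∀ᶠ t in atTop, 0 < f t)
    (hf : Tendsto (fun t => log (f t) / t) atTop (𝓝 δ)) (hr : r < δ) :
    Tendsto (fun t => f t * exp (-r * t)) atTop atTop := by
  have hlog : Tendsto (fun t => (log (f t) / t - r) * t) atTop atTop :=
    (hf.sub_const r).pos_mul_atTop (sub_pos.mpr hr) tendsto_id
  refine (tendsto_exp_atTop.comp hlog).congr' ?_
  filter_upwards [hpos, eventually_gt_atTop 0] with t hft ht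
  rw [Function.comp_apply, sub_mul, div_mul_cancel₀ _ ht.ne', exp_sub, exp_log hft, neg_mul,
    exp_neg, mul_comm r, div_eq_mul_inv]

theorem le_pow_mul_of_sub_one_le {f : ℝ → ℝ} {q T : ℝ} (hq : 0 ≤ q)
    (hstep : ∀ t, T ≤ t → f (t - 1) ≤ q * f t) (k : ℕ) {t : ℝ} (ht : T + k ≤ t + 1) :
    f (t - k) ≤ q ^ k * f t := by
  induction k generalizing t with
  | zero => simp
  | succ k ih =>
    push_cast at ht
    calc f (t - (k + 1 : ℕ)) = f (t - 1 - k) := by push_cast; ring_nf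
      _ ≤ q ^ k * f (t - 1) := ih (by linarith)
      _ ≤ q ^ k * (q * f t) := by
          gcongr
          exact hstep t (by linarith [(Nat.cast_nonneg k : (0 : ℝ) ≤ k)])
      _ = q ^ (k + 1) * f t := by ring

noncomputable def shiftedRatio (n : ℝ → ℝ) (c t : ℝ) : ℝ → ℝ :=
  (Ioc 0 t).indicator fun x => n (t - x) / n t * exp (c * x)

theorem integral_shiftedRatio (n : ℝ → ℝ) (c : ℝ) {t : ℝ} (ht : 0 ≤ t) :
    ∫ x, shiftedRatio n c t x = (∫ τ in (0 : ℝ)..t, n τ * exp (-c * τ)) * exp (c * t) / n t := by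
  rw [shiftedRatio, MeasureTheory.integral_indicator measurableSet_Ioc,
    ← intervalIntegral.integral_of_le ht, integral_mul_exp_neg_mul_mul_exp,
    ← intervalIntegral.integral_div]
  refine intervalIntegral.integral_congr fun x _ => ?_
  ring

namespace Assumption1

variable {n : ℝ → ℝ}

theorem nonneg (hn : Assumption1 n) (t : ℝ) : 0 ≤ n t := by
  rcases lt_trichotomy t 0 with ht | rfl | ht
  · exact (hn.1 t ht).ge
  · exact ge_of_tendsto hn.2.2.1 
      (eventually_nhdsWithin_of_forall fun s hs => (hn.2.2.2.1 s hs).le)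
  · exact (hn.2.2.2.1 t ht).le

theorem monotone (hn : Assumption1 n) : Monotone n := by
  intro u v huv
  rcases huv.eq_or_lt with rfl | huv
  · rfl
  rcases lt_trichotomy u 0 with hu | rfl | hu
  · exact (hn.1 u hu).trans_le (hn.nonneg v)
  · refine le_of_tendsto hn.2.2.1 ?_
    filter_upwards [Ioo_mem_nhdsGT huv] with s hs
    exact hn.2.2.2.2.1 hs.1 (hs.1.trans hs.2) hs.2.le
  · exact hn.2.2.2.2.1 hu (hu.trans huv) huv.le

variable {δ : ℝ}

theorem tendsto_div_apply_sub (hn : Assumption1 n)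
    (hδ : Tendsto (fun t => log (n t) / t) atTop (𝓝 δ)) {x : ℝ} (hx : 0 < x) :
    Tendsto (fun t => n (t - x) / n t) atTop (𝓝 (exp (-(δ * x)))) := by
  obtain ⟨L, hL, hlim⟩ := hn.2.2.2.2.2 x hx.le
  have hlog : Tendsto (fun t => log (n t) - log (n (t - x))) atTop (𝓝 (-log L)) := by
    refine (hlim.log hL.ne').neg.congr' ?_
    filter_upwards [eventually_gt_atTop x] with t ht
    rw [log_div (hn.2.2.2.1 _ (sub_pos.mpr ht)).ne' (hn.2.2.2.1 _ (hx.trans ht)).ne', neg_sub]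
  have hL_eq : -log L = δ * x := eq_mul_of_tendsto_div_of_tendsto_sub_shift hx hδ hlog
  rwa [← hL_eq, neg_neg, exp_log hL]

theorem eventually_apply_sub_le (hn : Assumption1 n)
    (hδ : Tendsto (fun t => log (n t) / t) atTop (𝓝 δ)) {r : ℝ} (hr0 : 0 ≤ r) (hrδ : r < δ) :
    ∀ᶠ t in atTop, ∀ x ∈ Icc 0 t, n (t - x) ≤ exp (r * (1 - x)) * n t := by
  have hpos : ∀ᶠ t in atTop, 0 < n t := (eventually_gt_atTop 0).mono hn.2.2.2.1
  obtain ⟨T, hT⟩ : ∃ T, ∀ t ≥ T, n (t - 1) ≤ exp (-r) * n t := by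
    have hq : exp (-(δ * 1)) < exp (-r) := exp_lt_exp.mpr (by linarith)
    refine eventually_atTop.mp ?_
    filter_upwards [(hn.tendsto_div_apply_sub hδ one_pos).eventually_le_const hq, hpos]
      with t hratio hnt
    exact (div_le_iff₀ hnt).mp hratio
  filter_upwards [(tendsto_mul_exp_neg_mul_atTop hpos hδ hrδ).eventually_ge_atTop
    (exp (-r) * n T)] with t hgrowth x ⟨hx0, hxt⟩
  have hnt : 0 ≤ n t := hn.nonneg t
  by_cases hx : x ≤ t + 1 - T
  · have hfloor := Nat.floor_le hx0
    calc n (t - x) ≤ n (t - ⌊x⌋₊) := hn.monotone (by linarith)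
      _ ≤ exp (-r) ^ ⌊x⌋₊ * n t := le_pow_mul_of_sub_one_le (exp_pos _).le hT _ (by linarith)
      _ = exp (-r * ⌊x⌋₊) * n t := by rw [← exp_nat_mul, mul_comm (⌊x⌋₊ : ℝ)]
      _ ≤ exp (r * (1 - x)) * n t :=
          mul_le_mul_of_nonneg_right (exp_le_exp.mpr (by nlinarith [Nat.lt_floor_add_one x])) hnt
  · calc n (t - x) ≤ n T := hn.monotone (by linarith)
      _ = exp r * (exp (-r) * n T) := by
          rw [← mul_assoc, ← exp_add, add_neg_cancel, exp_zero, one_mul]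
      _ ≤ exp r * (n t * exp (-r * t)) := by gcongr
      _ = exp (r * (1 - t)) * n t := by rw [mul_comm (n t), ← mul_assoc, ← exp_add]; ring_nf
      _ ≤ exp (r * (1 - x)) * n t := by gcongr

theorem eventually_norm_shiftedRatio_le (hn : Assumption1 n)
    (hδ : Tendsto (fun t => log (n t) / t) atTop (𝓝 δ)) {c r : ℝ} (hc0 : 0 ≤ c) (hcr : c < r)
    (hrδ : r < δ) :
    ∀ᶠ t in atTop, ∀ x, ‖shiftedRatio n c t x‖ ≤
      (Ioi 0).indicator (fun x => exp r * exp (-(r - c) * x)) x := by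
  filter_upwards [hn.eventually_apply_sub_le hδ (by linarith) hrδ, eventually_gt_atTop 0]
    with t hdom ht x
  have hnt : 0 < n t := hn.2.2.2.1 t ht
  by_cases hx : x ∈ Ioc 0 t
  · have hexp : exp r * exp (-(r - c) * x) = exp (r * (1 - x)) * exp (c * x) := by
      rw [← exp_add, ← exp_add]
      ring_nf
    rw [shiftedRatio, indicator_of_mem hx, indicator_of_mem (mem_Ioi.mpr hx.1), hexp,
      norm_of_nonneg (by have := hn.nonneg (t - x); positivity)]
    gcongr
    exact (div_le_iff₀ hnt).mpr (hdom x ⟨hx.1.le, hx.2⟩)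
  · rw [shiftedRatio, indicator_of_notMem hx, norm_zero]
    exact indicator_nonneg (fun _ _ => by positivity) x

theorem tendsto_shiftedRatio (hn : Assumption1 n)
    (hδ : Tendsto (fun t => log (n t) / t) atTop (𝓝 δ)) (c x : ℝ) :
    Tendsto (fun t => shiftedRatio n c t x) atTop
      (𝓝 ((Ioi 0).indicator (fun x => exp (-(δ - c) * x)) x)) := by
  by_cases hx : 0 < x
  · have hratio := (hn.tendsto_div_apply_sub hδ hx).mul_const (exp (c * x))
    rw [← exp_add, show -(δ * x) + c * x = -(δ - c) * x by ring] at hratio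
    rw [indicator_of_mem (mem_Ioi.mpr hx)]
    refine hratio.congr' ?_
    filter_upwards [eventually_ge_atTop x] with t ht
    rw [shiftedRatio, indicator_of_mem (mem_Ioc.mpr ⟨hx, ht⟩)]
  · simp [shiftedRatio, hx]

theorem tendsto_integral_mul_exp_div (hn : Assumption1 n)
    (hδ : Tendsto (fun t => log (n t) / t) atTop (𝓝 δ)) {c : ℝ} (hc0 : 0 ≤ c) (hcδ : c < δ) :
    Tendsto (fun t => (∫ τ in (0 : ℝ)..t, n τ * exp (-c * τ)) * exp (c * t) / n t) atTop
      (𝓝 (1 / (δ - c))) := by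
  obtain ⟨r, hcr, hrδ⟩ := exists_between hcδ
  have hmeas : ∀ t, AEStronglyMeasurable (shiftedRatio n c t) := fun t =>
    ((((hn.monotone.measurable.comp (measurable_const.sub measurable_id)).div_const _).mul
      (measurable_exp.comp (measurable_id.const_mul c))).indicator
      measurableSet_Ioc).aestronglyMeasurable
  have hint : Integrable ((Ioi 0).indicator (fun x => exp r * exp (-(r - c) * x))) :=
    (integrable_indicator_iff measurableSet_Ioi).mpr
      ((exp_neg_integrableOn_Ioi 0 (sub_pos.mpr hcr)).const_mul _)
  have hDCT := tendsto_integral_filter_of_dominated_convergence _ (.of_forall hmeas)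
    ((hn.eventually_norm_shiftedRatio_le hδ hc0 hcr hrδ).mono fun _ h => .of_forall h) hint
    (.of_forall (hn.tendsto_shiftedRatio hδ c))
  rw [MeasureTheory.integral_indicator measurableSet_Ioi, integral_exp_mul_Ioi (by linarith) 0,
    mul_zero, exp_zero, neg_div_neg_eq] at hDCT
  refine hDCT.congr' ?_
  filter_upwards [eventually_ge_atTop 0] with t ht
  exact integral_shiftedRatio n c ht

end Assumption1

/-- If `δ* > 2λ` with `λ = 1 − β`, the variance of the clone size converges to
`(δ*/λ)(2/(δ*−2λ) − (2−λ)/(δ*−λ)) − (δ*/(δ*−λ))²`. Here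
`E(Y_t) = e^{λt} (∫_0^t n_τ e^{−λτ} dτ)/a_t` and
`E(Y_t²) = (e^{2λt}/(λ a_t))(2∫_0^t n_τ e^{−2λτ} dτ − (2−λ)e^{−λt}∫_0^t n_τ e^{−λτ} dτ)`
with `a_t = ∫_0^t n_τ dτ`. -/
theorem variance_clone_size_limit
    (β : ℝ) (hβ : β ∈ Set.Ico (0 : ℝ) 1)
    (n : ℝ → ℝ) (hn : Assumption1 n) (δ lam : ℝ) (hlam : lam = 1 - β)
    (hδlim : Filter.Tendsto (fun t : ℝ => Real.log (n t) / t) Filter.atTop (nhds δ))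
    (hδ : 2 * lam < δ)
    (a mean m2 : ℝ → ℝ)
    (ha : ∀ t : ℝ, a t = ∫ τ in (0:ℝ)..t, n τ)
    (hmean : ∀ t : ℝ,
      mean t = Real.exp (lam * t) * (∫ τ in (0:ℝ)..t, n τ * Real.exp (-lam * τ)) / a t)
    (hm2 : ∀ t : ℝ,
      m2 t = Real.exp (2 * lam * t) / (lam * a t) *
        (2 * (∫ τ in (0:ℝ)..t, n τ * Real.exp (-(2 * lam) * τ)) -
          (2 - lam) * Real.exp (-lam * t) * ∫ τ in (0:ℝ)..t, n τ * Real.exp (-lam * τ))) :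
    Filter.Tendsto (fun t : ℝ => m2 t - (mean t) ^ 2) Filter.atTop
      (nhds ((δ / lam) * (2 / (δ - 2 * lam) - (2 - lam) / (δ - lam)) -
        (δ / (δ - lam)) ^ 2)) := by
  have hlam0 : 0 < lam := by linarith [hβ.2]
  have hδ₀ : 0 < δ := by linarith
  have hD₁ := hn.tendsto_integral_mul_exp_div hδlim hlam0.le (by linarith)
  have hD₂ := hn.tendsto_integral_mul_exp_div hδlim (by positivity) hδ
  have hD₀ : Tendsto (fun t => a t / n t) atTop (𝓝 (1 / δ)) := by
    simpa [ha] using hn.tendsto_integral_mul_exp_div hδlim le_rfl hδ₀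
  have hn_ne : ∀ᶠ t in atTop, n t ≠ 0 :=
    (eventually_gt_atTop 0).mono fun t ht => (hn.2.2.2.1 t ht).ne'
  have hmean_lim : Tendsto mean atTop (𝓝 (1 / (δ - lam) / (1 / δ))) := by
    refine (hD₁.div hD₀ (by positivity)).congr' ?_
    filter_upwards [hn_ne] with t hnt
    rw [Pi.div_apply, hmean, div_div_div_cancel_right₀ hnt, mul_comm]
  have hm2_lim : Tendsto m2 atTop
      (𝓝 ((2 * (1 / (δ - 2 * lam)) - (2 - lam) * (1 / (δ - lam))) / (lam * (1 / δ)))) := by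
    refine (((hD₂.const_mul 2).sub (hD₁.const_mul (2 - lam))).div (hD₀.const_mul lam)
      (by positivity)).congr' ?_
    filter_upwards [hn_ne] with t hnt
    have hexp : exp (2 * lam * t) * exp (-lam * t) = exp (lam * t) := by
      rw [← exp_add]; ring_nf
    simp only [Pi.div_apply, mul_div_assoc']
    rw [← sub_div, div_div_div_cancel_right₀ hnt, hm2, div_mul_eq_mul_div]
    congr 1
    linear_combination (2 - lam) * (∫ τ in (0:ℝ)..t, n τ * exp (-lam * τ)) * hexp
  convert hm2_lim.sub (hmean_lim.pow 2) using 2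
  field_simp
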